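/- For every integer m ≥ 1, writing s = n − 2m, one has (2n − 6s)·Ma_m(P) ≤ S_4(m). -/
import Mathlib


open scoped Classical

noncomputable section

/-- A point of the plane. -/
abbrev Pt : Type := ℝ × ℝ

/-- The closed straight-line segment with endpoints `a` and `b`. -/
def Seg (a b : Pt) : Set Pt := segment ℝ a b

/-- `P` is in general position: no three points of `P` are collinear and
no two points of `P` have the same `x`-coordinate. -/
def GenPos (P : Finset Pt) : Prop :=
  (∀ p ∈ P, ∀ q ∈ P, ∀ r ∈ P, p ≠ q → q ≠ r → p ≠ r →
      ¬ Collinear ℝ ({p, q, r} : Set Pt)) ∧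
  ∀ p ∈ P, ∀ q ∈ P, p ≠ q → p.1 ≠ q.1

/-- `M` is a crossing-free matching of `P`.  Each edge is recorded as an ordered
pair `(left endpoint, right endpoint)`, the left endpoint being the one of
smaller `x`-coordinate.  No point is an endpoint of more than one edge and no
two distinct edges intersect. -/
structure IsMatching (P : Finset Pt) (M : Finset (Pt × Pt)) : Prop where
  left_mem : ∀ e ∈ M, e.1 ∈ P
  right_mem : ∀ e ∈ M, e.2 ∈ P
  x_lt : ∀ e ∈ M, e.1.1 < e.2.1
  no_shared : ∀ e ∈ M, ∀ f ∈ M, e ≠ f →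
      e.1 ≠ f.1 ∧ e.1 ≠ f.2 ∧ e.2 ≠ f.1 ∧ e.2 ≠ f.2
  no_cross : ∀ e ∈ M, ∀ f ∈ M, e ≠ f → Seg e.1 e.2 ∩ Seg f.1 f.2 = ∅

/-- `p` is isolated in `M`: it is an endpoint of no edge of `M`. -/
def Isolated (M : Finset (Pt × Pt)) (p : Pt) : Prop :=
  ∀ e ∈ M, e.1 ≠ p ∧ e.2 ≠ p

/-- The `y`-coordinate of the point of the line through the endpoints of `e`
having abscissa `x`. -/
def yOn (e : Pt × Pt) (x : ℝ) : ℝ :=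
  e.1.2 + (x - e.1.1) * (e.2.2 - e.1.2) / (e.2.1 - e.1.1)

/-- The point of (the line supporting) the edge `e` with the same
`x`-coordinate as `q`. -/
def vproj (e : Pt × Pt) (q : Pt) : Pt := (q.1, yOn e q.1)

/-- `q` is vertically visible from the interior of the edge `e` of `M`:
its `x`-coordinate lies strictly between the `x`-coordinates of the endpoints
of `e`, and the open vertical segment joining `q` to the point of `e` with the
same `x`-coordinate meets no edge of `M` and contains no point of `P`. -/
def VertVisible (P : Finset Pt) (M : Finset (Pt × Pt)) (q : Pt) (e : Pt × Pt) : Prop :=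
  e.1.1 < q.1 ∧ q.1 < e.2.1 ∧
  (∀ f ∈ M, openSegment ℝ q (vproj e q) ∩ Seg f.1 f.2 = ∅) ∧
  ∀ r ∈ P, r ∉ openSegment ℝ q (vproj e q)

/-- `p` is the left endpoint of some edge of `M`. -/
def IsLeftEndpoint (M : Finset (Pt × Pt)) (p : Pt) : Prop := ∃ e ∈ M, e.1 = p

/-- `p` is the right endpoint of some edge of `M`. -/
def IsRightEndpoint (M : Finset (Pt × Pt)) (p : Pt) : Prop := ∃ e ∈ M, e.2 = p

/-- The rank `d_M(p)` of `p` in `M`. -/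
def rank (P : Finset Pt) (M : Finset (Pt × Pt)) (p : Pt) : ℕ :=
  if h : ∃ e ∈ M, e.1 = p then
    (P.filter fun q =>
      (Isolated M q ∨ IsLeftEndpoint M q) ∧ VertVisible P M q h.choose).card
  else if h' : ∃ e ∈ M, e.2 = p then
    (P.filter fun q =>
      (Isolated M q ∨ IsRightEndpoint M q) ∧ VertVisible P M q h'.choose).card
  else 0

/-- The result of inserting the edge `qp` into `M` (oriented left-to-right). -/
def addEdge (M : Finset (Pt × Pt)) (q p : Pt) : Finset (Pt × Pt) :=
  if q.1 < p.1 then insert (q, p) M else insert (p, q) M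

/-- `h_i(p,M)`: the number of points `q ∈ P` such that `M ∪ {qp}` is a
crossing-free matching of `P` in which `p` has rank `i`. -/
def hcount (P : Finset Pt) (M : Finset (Pt × Pt)) (p : Pt) (i : ℕ) : ℕ :=
  (P.filter fun q =>
    IsMatching P (addEdge M q p) ∧ rank P (addEdge M q p) p = i).card

/-- `l_i(p,M)`: the number of points `q ∈ P` to the left of `p` such that
`M ∪ {qp}` is a crossing-free matching of `P` in which `p` has rank `i`. -/
def lcount (P : Finset Pt) (M : Finset (Pt × Pt)) (p : Pt) (i : ℕ) : ℕ :=
  (P.filter fun q => q.1 < p.1 ∧ IsMatching P (insert (q, p) M) ∧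
    rank P (insert (q, p) M) p = i).card

/-- `v_i(M)`: the number of points of `P` of rank `i` in `M`. -/
def vcount (P : Finset Pt) (M : Finset (Pt × Pt)) (i : ℕ) : ℕ :=
  (P.filter fun p => rank P M p = i).card

/-- The (finite) collection of crossing-free matchings of `P` with `m` edges. -/
def Matchings (P : Finset Pt) (m : ℕ) : Finset (Finset (Pt × Pt)) :=
  (P ×ˢ P).powerset.filter fun M => IsMatching P M ∧ M.card = m

/-- `Ma_m(P)`: the number of crossing-free matchings of `P` with `m` edges. -/
def Ma (P : Finset Pt) (m : ℕ) : ℕ := (Matchings P m).card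

/-- `S_k(m)`: the sum of `Σ_{i=0}^{k} (k-i) h_i(p,M')` over all pairs `(p, M')`
with `M'` a crossing-free matching of `P` with `m-1` edges and `p ∈ P`
isolated in `M'`. -/
def Ssum (P : Finset Pt) (k m : ℕ) : ℕ :=
  ∑ M ∈ Matchings P (m - 1), ∑ p ∈ P.filter (fun p => Isolated M p),
    ∑ i ∈ Finset.range (k + 1), (k - i) * hcount P M p i

/-- The union of the edges of `M`, as a subset of the plane. -/
def edgesSet (M : Finset (Pt × Pt)) : Set Pt := ⋃ e ∈ M, Seg e.1 e.2

/-- The vertical wall of `r`: the maximal open vertical segment through `r`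
meeting no edge of `M` except possibly at `r` itself. -/
def Wall (M : Finset (Pt × Pt)) (r : Pt) : Set Pt :=
  {x : Pt | x.1 = r.1 ∧
    ∀ z : Pt, z.1 = r.1 → z.2 ∈ Set.uIcc x.2 r.2 → z ≠ r → z ∉ edgesSet M}

/-- The complement of the union of all edges of `M` and all vertical walls of
points of `P`; its connected components are the cells of the vertical
decomposition. -/
def FreeRegion (P : Finset Pt) (M : Finset (Pt × Pt)) : Set Pt :=
  (edgesSet M ∪ ⋃ r ∈ P, Wall M r)ᶜ

/-- `T` is a cell of the vertical decomposition of `M`. -/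
def IsCell (P : Finset Pt) (M : Finset (Pt × Pt)) (T : Set Pt) : Prop :=
  ∃ x ∈ FreeRegion P M, T = connectedComponentIn (FreeRegion P M) x

/-- `T` is the cell containing the points `(x(p) - ε, y(p))` for all
sufficiently small `ε > 0`. -/
def IsLeftCellOf (P : Finset Pt) (M : Finset (Pt × Pt)) (p : Pt) (T : Set Pt) : Prop :=
  IsCell P M T ∧ ∃ ε₀ > (0 : ℝ), ∀ ε : ℝ, 0 < ε → ε < ε₀ →
    ((p.1 - ε, p.2) : Pt) ∈ T

/-- `T` is the cell containing the points `(x(p) + ε, y(p))` for all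
sufficiently small `ε > 0`. -/
def IsRightCellOf (P : Finset Pt) (M : Finset (Pt × Pt)) (p : Pt) (T : Set Pt) : Prop :=
  IsCell P M T ∧ ∃ ε₀ > (0 : ℝ), ∀ ε : ℝ, 0 < ε → ε < ε₀ →
    ((p.1 + ε, p.2) : Pt) ∈ T

/-- `q` is the left bifurcation point of `p`: part of the boundary of the cell
to the left of `p` lies on the vertical wall of `q`, and `x(q)` is the infimum
of the abscissas of points of that cell. -/
def IsLeftBifPoint (P : Finset Pt) (M : Finset (Pt × Pt)) (p q : Pt) : Prop :=
  q ∈ P ∧ ∃ T, IsLeftCellOf P M p T ∧ (frontier T ∩ Wall M q).Nonempty ∧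
    IsGLB {x : ℝ | ∃ y : ℝ, ((x, y) : Pt) ∈ T} q.1

/-- `q` is the right bifurcation point of `p`. -/
def IsRightBifPoint (P : Finset Pt) (M : Finset (Pt × Pt)) (p q : Pt) : Prop :=
  q ∈ P ∧ ∃ T, IsRightCellOf P M p T ∧ (frontier T ∩ Wall M q).Nonempty ∧
    IsLUB {x : ℝ | ∃ y : ℝ, ((x, y) : Pt) ∈ T} q.1

/-- The edge `e` of `M` is vertically visible below `p`. -/
def EdgeVisBelow (P : Finset Pt) (M : Finset (Pt × Pt)) (e : Pt × Pt) (p : Pt) : Prop :=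
  e.1.1 < p.1 ∧ p.1 < e.2.1 ∧ yOn e p.1 < p.2 ∧
  (∀ f ∈ M, openSegment ℝ p (vproj e p) ∩ Seg f.1 f.2 = ∅) ∧
  ∀ r ∈ P, r ∉ openSegment ℝ p (vproj e p)

/-- The edge `e` of `M` is vertically visible above `p`. -/
def EdgeVisAbove (P : Finset Pt) (M : Finset (Pt × Pt)) (e : Pt × Pt) (p : Pt) : Prop :=
  e.1.1 < p.1 ∧ p.1 < e.2.1 ∧ p.2 < yOn e p.1 ∧
  (∀ f ∈ M, openSegment ℝ p (vproj e p) ∩ Seg f.1 f.2 = ∅) ∧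
  ∀ r ∈ P, r ∉ openSegment ℝ p (vproj e p)

end
open Finset

section Geom

lemma vproj_mem_seg {e : Pt × Pt} {x : ℝ} (hx : e.1.1 < e.2.1)
    (h1 : e.1.1 ≤ x) (h2 : x ≤ e.2.1) : ((x, yOn e x) : Pt) ∈ Seg e.1 e.2 := by
  have hd : (0:ℝ) < e.2.1 - e.1.1 := by linarith
  set t : ℝ := (x - e.1.1) / (e.2.1 - e.1.1) with ht
  have ht0 : 0 ≤ t := div_nonneg (by linarith) hd.le
  have ht1 : t ≤ 1 := by
    rw [ht, div_le_one hd]; linarith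
  refine ⟨1 - t, t, by linarith, ht0, by ring, ?_⟩
  have htx : t * (e.2.1 - e.1.1) = x - e.1.1 := by
    rw [ht, div_mul_cancel₀]; exact hd.ne'
  have : ((1-t) • e.1 + t • e.2 : Pt) = ((1-t) * e.1.1 + t * e.2.1, (1-t) * e.1.2 + t * e.2.2) := by
    rfl
  rw [this]
  have hx' : (1-t) * e.1.1 + t * e.2.1 = x := by nlinarith [htx]
  have hy' : (1-t) * e.1.2 + t * e.2.2 = yOn e x := by
    unfold yOn
    rw [show (x - e.1.1) * (e.2.2 - e.1.2) / (e.2.1 - e.1.1) = t * (e.2.2 - e.1.2) from by rw [ht]; ring]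
    ring
  rw [hx', hy']

lemma mem_openSegment_vert {x y1 y2 y3 : ℝ} (h1 : y1 < y2) (h2 : y2 < y3) :
    ((x, y2) : Pt) ∈ openSegment ℝ ((x, y1) : Pt) ((x, y3) : Pt) := by
  have hd : (0:ℝ) < y3 - y1 := by linarith
  set t : ℝ := (y2 - y1) / (y3 - y1) with ht
  have ht0 : 0 < t := div_pos (by linarith) hd
  have ht1 : t < 1 := by rw [ht, div_lt_one hd]; linarith
  refine ⟨1 - t, t, by linarith, ht0, by ring, ?_⟩
  have htx : t * (y3 - y1) = y2 - y1 := by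
    rw [ht, div_mul_cancel₀]; exact hd.ne'
  have : ((1-t) • ((x,y1) : Pt) + t • ((x,y3):Pt) : Pt) = ((1-t) * x + t * x, (1-t) * y1 + t * y3) := rfl
  rw [this]
  have : (1-t) * x + t * x = x := by ring
  rw [this]
  have : (1-t) * y1 + t * y3 = y2 := by nlinarith [htx]
  rw [this]

/-- strictly between in either order -/
lemma mem_openSegment_vert' {x y1 y2 y3 : ℝ} (h : y2 ∈ Set.Ioo (min y1 y3) (max y1 y3)) :
    ((x, y2) : Pt) ∈ openSegment ℝ ((x, y1) : Pt) ((x, y3) : Pt) := by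
  rcases lt_trichotomy y1 y3 with h13 | h13 | h13
  · rw [min_eq_left h13.le, max_eq_right h13.le] at h
    exact mem_openSegment_vert h.1 h.2
  · simp [h13] at h
  · rw [min_eq_right h13.le, max_eq_left h13.le] at h
    rw [openSegment_symm]
    exact mem_openSegment_vert h.1 h.2

lemma yOn_ne {P : Finset Pt} {M : Finset (Pt × Pt)} {e : Pt × Pt} {q : Pt}
    (hP : GenPos P) (hM : IsMatching P M) (he : e ∈ M) (hq : q ∈ P)
    (h1 : e.1.1 < q.1) (h2 : q.1 < e.2.1) : yOn e q.1 ≠ q.2 := by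
  intro hy
  have hxlt := hM.x_lt e he
  have hd : (0:ℝ) < e.2.1 - e.1.1 := by linarith
  set t : ℝ := (q.1 - e.1.1) / (e.2.1 - e.1.1) with ht
  have htx : t * (e.2.1 - e.1.1) = q.1 - e.1.1 := by
    rw [ht, div_mul_cancel₀]; exact hd.ne'
  have hq' : q = AffineMap.lineMap e.1 e.2 t := by
    have : (AffineMap.lineMap e.1 e.2 t : Pt) = t • (e.2 - e.1) + e.1 := by
      simp [AffineMap.lineMap_apply]
    rw [this]
    have : (t • (e.2 - e.1) + e.1 : Pt) = (t * (e.2.1 - e.1.1) + e.1.1, t * (e.2.2 - e.1.2) + e.1.2) := rfl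
    rw [this]
    have hx' : t * (e.2.1 - e.1.1) + e.1.1 = q.1 := by linarith [htx]
    have hy' : t * (e.2.2 - e.1.2) + e.1.2 = q.2 := by
      rw [← hy]; unfold yOn
      rw [show (q.1 - e.1.1) * (e.2.2 - e.1.2) / (e.2.1 - e.1.1) = t * (e.2.2 - e.1.2) from by rw [ht]; ring]
      ring
    rw [hx', hy']
  have hcol : Collinear ℝ ({q, e.1, e.2} : Set Pt) := by
    apply collinear_insert_of_mem_affineSpan_pair
    rw [hq']
    exact AffineMap.lineMap_mem_affineSpan_pair t e.1 e.2
  exact hP.1 q hq e.1 (hM.left_mem e he) e.2 (hM.right_mem e he)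
    (fun h => by rw [h] at h1; exact lt_irrefl _ h1)
    (fun h => by rw [h] at hxlt; exact lt_irrefl _ hxlt)
    (fun h => by rw [h] at h2; exact lt_irrefl _ h2) hcol

lemma visible_card_le_two {P : Finset Pt} {M : Finset (Pt × Pt)} {q : Pt}
    (hP : GenPos P) (hM : IsMatching P M) (hq : q ∈ P) :
    (M.filter (fun e => VertVisible P M q e)).card ≤ 2 := by
  have h2 : (Finset.univ : Finset Bool).card = 2 := by simp
  rw [← h2]
  apply Finset.card_le_card_of_injOn (fun e => decide (q.2 < yOn e q.1))
    (fun _ _ => Finset.mem_univ _)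
  intro e he f hf hef
  simp only [Finset.coe_filter, Set.mem_setOf_eq] at he hf
  obtain ⟨heM, hev⟩ := he
  obtain ⟨hfM, hfv⟩ := hf
  by_contra hne
  -- both above or both below q
  have hene : yOn e q.1 ≠ q.2 := yOn_ne hP hM heM hq hev.1 hev.2.1
  have hfne : yOn f q.1 ≠ q.2 := yOn_ne hP hM hfM hq hfv.1 hfv.2.1
  have hsame : (q.2 < yOn e q.1) ↔ (q.2 < yOn f q.1) := by
    constructor <;> intro h <;> [skip; skip] <;>
    · by_contra h'
      simp [h, h'] at hef
  -- wlog setup: a helper handling yOn e < yOn f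
  have key : ∀ a b : Pt × Pt, a ∈ M → b ∈ M → a ≠ b → VertVisible P M q a → VertVisible P M q b →
      ((q.2 < yOn a q.1) ↔ (q.2 < yOn b q.1)) → yOn a q.1 < yOn b q.1 → False := by
    intro a b haM hbM hab hav hbv hiff hlt
    have hane : yOn a q.1 ≠ q.2 := yOn_ne hP hM haM hq hav.1 hav.2.1
    have hbne : yOn b q.1 ≠ q.2 := yOn_ne hP hM hbM hq hbv.1 hbv.2.1
    rcases lt_or_gt_of_ne hane with ha2 | ha2
    · -- yOn a < q.2 : both below; point (q.1, yOn b q.1) is in open seg q→vproj a, and on Seg b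
      have hb2 : yOn b q.1 < q.2 := by
        rcases lt_or_gt_of_ne hbne with h | h
        · exact h
        · exact absurd (hiff.mpr h) (by linarith)
      have hmem1 : ((q.1, yOn b q.1) : Pt) ∈ openSegment ℝ q (vproj a q) := by
        have : q = ((q.1, q.2) : Pt) := rfl
        rw [this]
        unfold vproj
        rw [openSegment_symm]
        exact mem_openSegment_vert hlt hb2
      have hmem2 : ((q.1, yOn b q.1) : Pt) ∈ Seg b.1 b.2 :=
        vproj_mem_seg (hM.x_lt b hbM) hbv.1.le hbv.2.1.le
      have := hav.2.2.1 b hbM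
      rw [Set.eq_empty_iff_forall_notMem] at this
      exact this _ ⟨hmem1, hmem2⟩
    · -- q.2 < yOn a < yOn b : point (q.1, yOn a q.1) in open seg q→vproj b, and on Seg a
      have hmem1 : ((q.1, yOn a q.1) : Pt) ∈ openSegment ℝ q (vproj b q) := by
        have : q = ((q.1, q.2) : Pt) := rfl
        rw [this]
        unfold vproj
        exact mem_openSegment_vert ha2 hlt
      have hmem2 : ((q.1, yOn a q.1) : Pt) ∈ Seg a.1 a.2 :=
        vproj_mem_seg (hM.x_lt a haM) hav.1.le hav.2.1.le
      have := hbv.2.2.1 a haM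
      rw [Set.eq_empty_iff_forall_notMem] at this
      exact this _ ⟨hmem1, hmem2⟩
  rcases lt_trichotomy (yOn e q.1) (yOn f q.1) with h | h | h
  · exact key e f heM hfM hne hev hfv hsame h
  · -- equal: common point on both segments
    have hmem1 : ((q.1, yOn e q.1) : Pt) ∈ Seg e.1 e.2 :=
      vproj_mem_seg (hM.x_lt e heM) hev.1.le hev.2.1.le
    have hmem2 : ((q.1, yOn e q.1) : Pt) ∈ Seg f.1 f.2 := by
      rw [h]
      exact vproj_mem_seg (hM.x_lt f hfM) hfv.1.le hfv.2.1.le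
    have := hM.no_cross e heM f hfM hne
    rw [Set.eq_empty_iff_forall_notMem] at this
    exact this _ ⟨hmem1, hmem2⟩
  · exact key f e hfM heM (Ne.symm hne) hfv hev hsame.symm h

end Geom
section Count

variable {P : Finset Pt} {M : Finset (Pt × Pt)}

lemma rank_left {e : Pt × Pt} (hM : IsMatching P M) (he : e ∈ M) :
    rank P M e.1 = (P.filter fun q =>
      (Isolated M q ∨ IsLeftEndpoint M q) ∧ VertVisible P M q e).card := by
  have h : ∃ f ∈ M, f.1 = e.1 := ⟨e, he, rfl⟩
  rw [rank, dif_pos h]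
  have hce : h.choose = e := by
    obtain ⟨hmem, heq⟩ := h.choose_spec
    by_contra hne
    exact (hM.no_shared _ hmem e he hne).1 heq
  rw [hce]

lemma not_left_of_right {e : Pt × Pt} (hM : IsMatching P M) (he : e ∈ M) :
    ¬ ∃ f ∈ M, f.1 = e.2 := by
  rintro ⟨f, hf, hfe⟩
  by_cases hfe' : f = e
  · subst hfe'
    have := hM.x_lt f hf
    rw [hfe] at this
    exact lt_irrefl _ this
  · exact (hM.no_shared f hf e he hfe').2.1 hfe

lemma rank_right {e : Pt × Pt} (hM : IsMatching P M) (he : e ∈ M) :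
    rank P M e.2 = (P.filter fun q =>
      (Isolated M q ∨ IsRightEndpoint M q) ∧ VertVisible P M q e).card := by
  have h : ∃ f ∈ M, f.2 = e.2 := ⟨e, he, rfl⟩
  rw [rank, dif_neg (not_left_of_right hM he), dif_pos h]
  have hce : h.choose = e := by
    obtain ⟨hmem, heq⟩ := h.choose_spec
    by_contra hne
    exact (hM.no_shared _ hmem e he hne).2.2.2 heq
  rw [hce]

lemma card_image_fst (hM : IsMatching P M) : (M.image Prod.fst).card = M.card := by
  apply Finset.card_image_of_injOn
  intro a ha b hb hab
  by_contra hne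
  exact (hM.no_shared a ha b hb hne).1 hab

lemma card_image_snd (hM : IsMatching P M) : (M.image Prod.snd).card = M.card := by
  apply Finset.card_image_of_injOn
  intro a ha b hb hab
  by_contra hne
  exact (hM.no_shared a ha b hb hne).2.2.2 hab

lemma disj_images (hM : IsMatching P M) :
    Disjoint (M.image Prod.fst) (M.image Prod.snd) := by
  rw [Finset.disjoint_left]
  rintro p hp1 hp2
  simp only [Finset.mem_image] at hp1 hp2
  obtain ⟨a, ha, hap⟩ := hp1
  obtain ⟨b, hb, hbp⟩ := hp2
  by_cases hab : a = b
  · subst hab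
    have := hM.x_lt a ha
    rw [hap, ← hbp] at this
    exact lt_irrefl _ this
  · exact (hM.no_shared a ha b hb hab).2.1 (hap.trans hbp.symm)

lemma two_mul_card_le (hM : IsMatching P M) : 2 * M.card ≤ P.card := by
  have hsub : (M.image Prod.fst) ∪ (M.image Prod.snd) ⊆ P := by
    intro p hp
    rcases Finset.mem_union.mp hp with h | h <;> simp only [Finset.mem_image] at h
    · obtain ⟨a, ha, hap⟩ := h; rw [← hap]; exact hM.left_mem a ha
    · obtain ⟨a, ha, hap⟩ := h; rw [← hap]; exact hM.right_mem a ha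
  calc 2 * M.card = (M.image Prod.fst ∪ M.image Prod.snd).card := by
        rw [Finset.card_union_of_disjoint (disj_images hM), card_image_fst hM,
          card_image_snd hM]; ring
    _ ≤ P.card := Finset.card_le_card hsub

lemma filter_iso_or_left (hM : IsMatching P M) :
    P.filter (fun q => Isolated M q ∨ IsLeftEndpoint M q) = P \ (M.image Prod.snd) := by
  ext p
  simp only [Finset.mem_filter, Finset.mem_sdiff, Finset.mem_image, not_exists]
  constructor
  · rintro ⟨hp, h⟩
    refine ⟨hp, fun e hc => ?_⟩
    obtain ⟨he, hep⟩ := hc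
    rcases h with h | h
    · exact (h e he).2 hep
    · obtain ⟨a, ha, hap⟩ := h
      by_cases hae : a = e
      · subst hae
        have := hM.x_lt a ha
        rw [hap, hep] at this
        exact lt_irrefl _ this
      · exact (hM.no_shared a ha e he hae).2.1 (hap.trans hep.symm)
  · rintro ⟨hp, h⟩
    refine ⟨hp, ?_⟩
    by_cases hiso : Isolated M p
    · exact Or.inl hiso
    · right
      unfold Isolated at hiso
      push_neg at hiso
      obtain ⟨e, he, hne⟩ := hiso
      by_cases hp1 : e.1 = p
      · exact ⟨e, he, hp1⟩
      · exact absurd ⟨he, hne hp1⟩ (h e)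

lemma filter_iso_or_right (hM : IsMatching P M) :
    P.filter (fun q => Isolated M q ∨ IsRightEndpoint M q) = P \ (M.image Prod.fst) := by
  ext p
  simp only [Finset.mem_filter, Finset.mem_sdiff, Finset.mem_image, not_exists]
  constructor
  · rintro ⟨hp, h⟩
    refine ⟨hp, fun e hc => ?_⟩
    obtain ⟨he, hep⟩ := hc
    rcases h with h | h
    · exact (h e he).1 hep
    · obtain ⟨a, ha, hap⟩ := h
      by_cases hae : a = e
      · subst hae
        have := hM.x_lt a ha
        rw [hap, hep] at this
        exact lt_irrefl _ this
      · exact (hM.no_shared e he a ha (Ne.symm hae)).2.1 (hep.trans hap.symm)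
  · rintro ⟨hp, h⟩
    refine ⟨hp, ?_⟩
    by_cases hiso : Isolated M p
    · exact Or.inl hiso
    · right
      unfold Isolated at hiso
      push_neg at hiso
      obtain ⟨e, he, hne⟩ := hiso
      by_cases hp1 : e.1 = p
      · exact absurd ⟨he, hp1⟩ (h e)
      · exact ⟨e, he, hne hp1⟩

lemma card_filter_iso_or_left (hM : IsMatching P M) :
    (P.filter (fun q => Isolated M q ∨ IsLeftEndpoint M q)).card = P.card - M.card := by
  rw [filter_iso_or_left hM, Finset.card_sdiff_of_subset, card_image_snd hM]
  intro p hp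
  simp only [Finset.mem_image] at hp
  obtain ⟨a, ha, hap⟩ := hp
  rw [← hap]; exact hM.right_mem a ha

lemma card_filter_iso_or_right (hM : IsMatching P M) :
    (P.filter (fun q => Isolated M q ∨ IsRightEndpoint M q)).card = P.card - M.card := by
  rw [filter_iso_or_right hM, Finset.card_sdiff_of_subset, card_image_fst hM]
  intro p hp
  simp only [Finset.mem_image] at hp
  obtain ⟨a, ha, hap⟩ := hp
  rw [← hap]; exact hM.left_mem a ha

lemma sum_vis_le (hP : GenPos P) (hM : IsMatching P M) (C : Pt → Prop) :
    ∑ e ∈ M, (P.filter fun q => C q ∧ VertVisible P M q e).card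
      ≤ 2 * (P.filter C).card := by
  have step1 : ∀ e ∈ M, (P.filter fun q => C q ∧ VertVisible P M q e).card
      = ∑ q ∈ P, if C q ∧ VertVisible P M q e then 1 else 0 := by
    intro e _; rw [Finset.card_filter]
  rw [Finset.sum_congr rfl step1, Finset.sum_comm]
  have step2 : ∀ q ∈ P, (∑ e ∈ M, if C q ∧ VertVisible P M q e then 1 else 0)
      ≤ if C q then 2 else 0 := by
    intro q hq
    by_cases hc : C q
    · rw [if_pos hc]
      have : (∑ e ∈ M, if C q ∧ VertVisible P M q e then 1 else 0)
          = (M.filter fun e => VertVisible P M q e).card := by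
        rw [Finset.card_filter]
        exact Finset.sum_congr rfl fun e _ => by simp [hc]
      rw [this]
      exact visible_card_le_two hP hM hq
    · rw [if_neg hc]
      apply le_of_eq
      exact Finset.sum_eq_zero fun e _ => by simp [hc]
  calc (∑ q ∈ P, ∑ e ∈ M, if C q ∧ VertVisible P M q e then 1 else 0)
      ≤ ∑ q ∈ P, (if C q then 2 else 0) := Finset.sum_le_sum step2
    _ = ∑ q ∈ P.filter C, 2 := (Finset.sum_filter _ _).symm
    _ = 2 * (P.filter C).card := by rw [Finset.sum_const, smul_eq_mul, mul_comm]

set_option maxHeartbeats 1000000 in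
lemma perM (hP : GenPos P) (hM : IsMatching P M) :
    (12 * (M.card : ℤ) - 4 * (P.card : ℤ)) ≤
      ∑ e ∈ M, (((4 - rank P M e.1 : ℕ) : ℤ) + ((4 - rank P M e.2 : ℕ) : ℤ)) := by
  have h2m := two_mul_card_le hM
  have hL : ∑ e ∈ M, rank P M e.1 ≤ 2 * (P.card - M.card) := by
    calc ∑ e ∈ M, rank P M e.1
        = ∑ e ∈ M, (P.filter fun q =>
            (Isolated M q ∨ IsLeftEndpoint M q) ∧ VertVisible P M q e).card :=
          Finset.sum_congr rfl fun e he => rank_left hM he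
      _ ≤ 2 * (P.filter (fun q => Isolated M q ∨ IsLeftEndpoint M q)).card := by
          have h := sum_vis_le hP hM (fun q => Isolated M q ∨ IsLeftEndpoint M q)
          convert h using 4
      _ = 2 * (P.card - M.card) := by rw [card_filter_iso_or_left hM]
  have hR : ∑ e ∈ M, rank P M e.2 ≤ 2 * (P.card - M.card) := by
    calc ∑ e ∈ M, rank P M e.2
        = ∑ e ∈ M, (P.filter fun q =>
            (Isolated M q ∨ IsRightEndpoint M q) ∧ VertVisible P M q e).card :=
          Finset.sum_congr rfl fun e he => rank_right hM he
      _ ≤ 2 * (P.filter (fun q => Isolated M q ∨ IsRightEndpoint M q)).card := by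
          have h := sum_vis_le hP hM (fun q => Isolated M q ∨ IsRightEndpoint M q)
          convert h using 4
      _ = 2 * (P.card - M.card) := by rw [card_filter_iso_or_right hM]
  have key : ∀ e ∈ M, (8 : ℤ) - (rank P M e.1 : ℤ) - (rank P M e.2 : ℤ) ≤
      ((4 - rank P M e.1 : ℕ) : ℤ) + ((4 - rank P M e.2 : ℕ) : ℤ) := by
    intro e _; omega
  have h1 : ∑ e ∈ M, ((8 : ℤ) - (rank P M e.1 : ℤ) - (rank P M e.2 : ℤ)) ≤
      ∑ e ∈ M, (((4 - rank P M e.1 : ℕ) : ℤ) + ((4 - rank P M e.2 : ℕ) : ℤ)) :=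
    Finset.sum_le_sum key
  refine le_trans ?_ h1
  have e1 : ∑ e ∈ M, ((8 : ℤ) - (rank P M e.1 : ℤ) - (rank P M e.2 : ℤ))
      = 8 * M.card - ((∑ e ∈ M, rank P M e.1 : ℕ) : ℤ) - ((∑ e ∈ M, rank P M e.2 : ℕ) : ℤ) := by
    rw [Finset.sum_sub_distrib, Finset.sum_sub_distrib, Finset.sum_const]
    push_cast
    ring
  rw [e1]
  have c1 : ((∑ e ∈ M, rank P M e.1 : ℕ) : ℤ) ≤ 2 * ((P.card : ℤ) - M.card) := by
    have := hL; omega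
  have c2 : ((∑ e ∈ M, rank P M e.2 : ℕ) : ℤ) ≤ 2 * ((P.card : ℤ) - M.card) := by
    have := hR; omega
  linarith

end Count
section Reindex

variable {P : Finset Pt}

lemma IsMatching.mono {M M' : Finset (Pt × Pt)} (hM : IsMatching P M) (h : M' ⊆ M) :
    IsMatching P M' :=
  ⟨fun e he => hM.left_mem e (h he), fun e he => hM.right_mem e (h he),
   fun e he => hM.x_lt e (h he),
   fun e he f hf => hM.no_shared e (h he) f (h hf),
   fun e he f hf => hM.no_cross e (h he) f (h hf)⟩

lemma mem_Matchings {M : Finset (Pt × Pt)} {m : ℕ} :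
    M ∈ Matchings P m ↔ M ⊆ P ×ˢ P ∧ IsMatching P M ∧ M.card = m := by
  rw [Matchings, Finset.mem_filter, Finset.mem_powerset]

lemma addEdge_erase {M : Finset (Pt × Pt)} (hM : IsMatching P M) {e : Pt × Pt}
    (he : e ∈ M) (b : Bool) :
    addEdge (M.erase e) (cond b e.2 e.1) (cond b e.1 e.2) = M := by
  have hx := hM.x_lt e he
  cases b
  · show addEdge (M.erase e) e.1 e.2 = M
    rw [addEdge, if_pos hx, Prod.mk.eta, Finset.insert_erase he]
  · show addEdge (M.erase e) e.2 e.1 = M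
    rw [addEdge, if_neg (not_lt.mpr hx.le), Prod.mk.eta, Finset.insert_erase he]

lemma sumA (s : Finset Pt) (g : Pt → ℕ) :
    ∑ i ∈ Finset.range (4 + 1), (4 - i) * (s.filter (fun a => g a = i)).card
      = ∑ a ∈ s, (4 - g a) := by
  have h2 : ∀ i ∈ Finset.range (4 + 1), (4 - i) * (s.filter (fun a => g a = i)).card
      = ∑ a ∈ s, if g a = i then 4 - i else 0 := by
    intro i _
    rw [← Finset.sum_filter, Finset.sum_const, smul_eq_mul, mul_comm]
  rw [Finset.sum_congr rfl h2, Finset.sum_comm]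
  apply Finset.sum_congr rfl
  intro a _
  rw [Finset.sum_ite_eq (Finset.range (4 + 1)) (g a) (fun i => 4 - i)]
  by_cases h : g a < 4 + 1
  · rw [if_pos (Finset.mem_range.mpr h)]
  · rw [if_neg (fun hc => h (Finset.mem_range.mp hc))]; omega

lemma inner_rewrite (M : Finset (Pt × Pt)) (p : Pt) :
    ∑ i ∈ Finset.range (4 + 1), (4 - i) * hcount P M p i
      = ∑ q ∈ P.filter (fun q => IsMatching P (addEdge M q p)),
          (4 - rank P (addEdge M q p) p) := by
  rw [← sumA (P.filter (fun q => IsMatching P (addEdge M q p)))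
      (fun q => rank P (addEdge M q p) p)]
  apply Finset.sum_congr rfl
  intro i _
  congr 1
  rw [hcount]
  apply congrArg Finset.card
  ext q
  simp only [Finset.mem_filter, and_assoc]

set_option maxHeartbeats 1000000 in
lemma sum_matchings_le (hP : GenPos P) (m : ℕ) (hm : 1 ≤ m) :
    ∑ M ∈ Matchings P m, ∑ e ∈ M, ((4 - rank P M e.1) + (4 - rank P M e.2))
      ≤ Ssum P 4 m := by
  classical
  set B := (Matchings P (m-1)).sigma (fun M => (P.filter (fun p => Isolated M p)).sigma
      (fun p => P.filter (fun q => IsMatching P (addEdge M q p)))) with hB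
  set F : (Σ _ : Finset (Pt × Pt), Σ _ : Pt, Pt) → ℕ :=
      fun y => 4 - rank P (addEdge y.1 y.2.2 y.2.1) y.2.1 with hF
  set A := (Matchings P m).sigma (fun M => M ×ˢ (Finset.univ : Finset Bool)) with hA
  set φ : (Σ _ : Finset (Pt × Pt), (Pt × Pt) × Bool) → (Σ _ : Finset (Pt × Pt), Σ _ : Pt, Pt) :=
      fun x => ⟨x.1.erase x.2.1, ⟨cond x.2.2 x.2.1.1 x.2.1.2, cond x.2.2 x.2.1.2 x.2.1.1⟩⟩ with hφ
  have L1 : ∑ M ∈ Matchings P m, ∑ e ∈ M, ((4 - rank P M e.1) + (4 - rank P M e.2))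
      = ∑ x ∈ A, F (φ x) := by
    rw [hA, Finset.sum_sigma]
    apply Finset.sum_congr rfl
    intro M hM
    obtain ⟨hsub, hMm, hcard⟩ := mem_Matchings.mp hM
    rw [Finset.sum_product]
    apply Finset.sum_congr rfl
    intro e he
    rw [Fintype.sum_bool]
    simp only [hφ, hF]
    rw [show (cond true e.1 e.2) = e.1 from rfl, show (cond true e.2 e.1) = e.2 from rfl,
      show (cond false e.1 e.2) = e.2 from rfl, show (cond false e.2 e.1) = e.1 from rfl]
    rw [show addEdge (M.erase e) e.2 e.1 = M from addEdge_erase hMm he true,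
      show addEdge (M.erase e) e.1 e.2 = M from addEdge_erase hMm he false]
  have Lmem : ∀ x ∈ A, φ x ∈ B := by
    rintro ⟨M, e, b⟩ hx
    rw [hA, Finset.mem_sigma] at hx
    obtain ⟨hM, hx2⟩ := hx
    have he : e ∈ M := (Finset.mem_product.mp hx2).1
    obtain ⟨hsub, hMm, hcard⟩ := mem_Matchings.mp hM
    rw [hB, hφ, Finset.mem_sigma]
    constructor
    · exact mem_Matchings.mpr ⟨(Finset.erase_subset e M).trans hsub,
        hMm.mono (Finset.erase_subset e M),
        by rw [Finset.card_erase_of_mem he, hcard]⟩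
    · rw [Finset.mem_sigma]
      constructor
      · rw [Finset.mem_filter]
        constructor
        · cases b
          · exact hMm.right_mem e he
          · exact hMm.left_mem e he
        · intro f hf
          obtain ⟨hfe, hfM⟩ := Finset.mem_erase.mp hf
          have ns := hMm.no_shared f hfM e he hfe
          cases b
          · exact ⟨ns.2.1, ns.2.2.2⟩
          · exact ⟨ns.1, ns.2.2.1⟩
      · rw [Finset.mem_filter]
        constructor
        · cases b
          · exact hMm.left_mem e he
          · exact hMm.right_mem e he
        · rw [addEdge_erase hMm he b]
          exact hMm
  have Linj : ∀ x ∈ A, ∀ x' ∈ A, φ x = φ x' → x = x' := by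
    rintro ⟨M, e, b⟩ hx ⟨M', e', b'⟩ hx' heq
    rw [hA, Finset.mem_sigma] at hx hx'
    have he : e ∈ M := (Finset.mem_product.mp hx.2).1
    have he' : e' ∈ M' := (Finset.mem_product.mp hx'.2).1
    obtain ⟨_, hMm, _⟩ := mem_Matchings.mp hx.1
    obtain ⟨_, hMm', _⟩ := mem_Matchings.mp hx'.1
    have hx1 := hMm.x_lt e he
    have hx1' := hMm'.x_lt e' he'
    simp only [hφ, Sigma.mk.inj_iff, heq_eq_eq] at heq
    obtain ⟨h1, h2, h3⟩ := heq
    have hbb : b = b' := by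
      cases b <;> cases b' <;> simp only [cond] at h2 h3
      · rfl
      · exfalso
        have a1 : e.2.1 = e'.1.1 := congrArg Prod.fst h2
        have a2 : e.1.1 = e'.2.1 := congrArg Prod.fst h3
        linarith
      · exfalso
        have a1 : e.1.1 = e'.2.1 := congrArg Prod.fst h2
        have a2 : e.2.1 = e'.1.1 := congrArg Prod.fst h3
        linarith
      · rfl
    subst hbb
    have hee : e = e' := by
      cases b <;> simp only [cond] at h2 h3
      · exact Prod.ext h3 h2
      · exact Prod.ext h2 h3
    subst hee
    have hMM : M = M' := by
      rw [← Finset.insert_erase he, ← Finset.insert_erase he', h1]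
    subst hMM
    rfl
  have L2 : ∑ x ∈ A, F (φ x) = ∑ y ∈ A.image φ, F y := (Finset.sum_image Linj).symm
  have L3 : ∑ y ∈ A.image φ, F y ≤ ∑ y ∈ B, F y := by
    apply Finset.sum_le_sum_of_subset
    intro y hy
    obtain ⟨x, hxA, hxy⟩ := Finset.mem_image.mp hy
    rw [← hxy]
    exact Lmem x hxA
  have L4 : ∑ y ∈ B, F y = Ssum P 4 m := by
    rw [hB, Finset.sum_sigma, Ssum]
    apply Finset.sum_congr rfl
    intro M hM
    rw [Finset.sum_sigma]
    apply Finset.sum_congr rfl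
    intro p hp
    rw [inner_rewrite M p]
  rw [L1, L2, ← L4]
  exact L3

end Reindex
/-- For every integer `m ≥ 1`, writing `s = n − 2m`,
one has `(2n − 6s)·Ma_m(P) ≤ S_4(m)`. -/
theorem Ma_le_Ssum_four (P : Finset Pt) (hP : GenPos P) (m : ℕ) (hm : 1 ≤ m) :
    (2 * (P.card : ℤ) - 6 * ((P.card : ℤ) - 2 * m)) * Ma P m ≤ Ssum P 4 m := by
  have key : ∀ M ∈ Matchings P m,
      (12 * (m : ℤ) - 4 * P.card) ≤
        ((∑ e ∈ M, ((4 - rank P M e.1) + (4 - rank P M e.2)) : ℕ) : ℤ) := by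
    intro M hM
    obtain ⟨hsub, hMm, hcard⟩ := mem_Matchings.mp hM
    have hpm := perM hP hMm
    rw [hcard] at hpm
    refine le_trans hpm (le_of_eq ?_)
    rw [Nat.cast_sum]
    exact Finset.sum_congr rfl fun e _ => (Nat.cast_add _ _).symm
  have h1 : (2 * (P.card : ℤ) - 6 * ((P.card : ℤ) - 2 * m)) * Ma P m
      = ∑ _M ∈ Matchings P m, (12 * (m : ℤ) - 4 * P.card) := by
    rw [Finset.sum_const, nsmul_eq_mul, Ma]
    ring
  calc (2 * (P.card : ℤ) - 6 * ((P.card : ℤ) - 2 * m)) * Ma P m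
      = ∑ _M ∈ Matchings P m, (12 * (m : ℤ) - 4 * P.card) := h1
    _ ≤ ∑ M ∈ Matchings P m,
          ((∑ e ∈ M, ((4 - rank P M e.1) + (4 - rank P M e.2)) : ℕ) : ℤ) :=
        Finset.sum_le_sum key
    _ = ((∑ M ∈ Matchings P m, ∑ e ∈ M,
          ((4 - rank P M e.1) + (4 - rank P M e.2)) : ℕ) : ℤ) := (Nat.cast_sum _ _).symm
    _ ≤ (Ssum P 4 m : ℤ) := Nat.cast_le.mpr (sum_matchings_le hP m hm)
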